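/- Semi-discrete entropy conservation for the matrix formulation: let Q ∈ ℝ^{n×n} satisfy Q + Qᵀ = B with B diagonal and Q·1 = 0, let F be a symmetric matrix, and let v, ψ ∈ ℝⁿ satisfy the entropy conservation condition (v_m - v_n) F_{mn} = ψ_m - ψ_n for all m,n. Then vᵀ(2Q ∘ F)1 = Σ_m B_{mm} v_m F_{mm} - Σ_m B_{mm} ψ_m. -/
import Mathlib


open Matrix

/-- Semi-discrete entropy conservation in matrix form: if `Q + Qᵀ = diag(b)`,
`Q·1 = 0`, `F` is symmetric, and `(vₘ - vₙ) Fₘₙ = ψₘ - ψₙ` for all `m, n`, then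
`vᵀ(2Q ∘ F)1 = Σ_m bₘ (vₘ Fₘₘ - ψₘ)`. -/
theorem entropy_conservation_matrix_form {n : ℕ}
    (Q F : Matrix (Fin n) (Fin n) ℝ) (b v ψ : Fin n → ℝ)
    (hB : Q + Qᵀ = Matrix.diagonal b)
    (hQ1 : Q *ᵥ (fun _ : Fin n => (1 : ℝ)) = 0)
    (hF : Fᵀ = F)
    (hEC : ∀ m k, (v m - v k) * F m k = ψ m - ψ k) :
    v ⬝ᵥ ((((2 : ℝ) • Q).hadamard F) *ᵥ fun _ : Fin n => (1 : ℝ))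
      = ∑ m, b m * (v m * F m m - ψ m) := by
  have hFs : ∀ m k, F k m = F m k := fun m k => by
    conv_lhs => rw [← hF]
    rfl
  have hBe : ∀ m k, Q m k + Q k m = Matrix.diagonal b m k := fun m k => by
    have := congrFun (congrFun hB m) k
    simpa [Matrix.add_apply, Matrix.transpose_apply] using this
  have hrow : ∀ m, ∑ k, Q m k = 0 := fun m => by
    have := congrFun hQ1 m
    simpa [Matrix.mulVec, dotProduct] using this
  have hcol : ∀ k, ∑ m, Q m k = b k := by
    intro k
    have h1 : ∑ m, (Q m k + Q k m) = b k := by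
      rw [Finset.sum_congr rfl fun m _ => hBe m k]
      simp [Matrix.diagonal]
    rw [Finset.sum_add_distrib, hrow k, add_zero] at h1
    exact h1
  have hL : v ⬝ᵥ ((((2 : ℝ) • Q).hadamard F) *ᵥ fun _ : Fin n => (1 : ℝ))
      = ∑ m, ∑ k, 2 * Q m k * F m k * v m := by
    simp only [dotProduct, Matrix.mulVec, Matrix.hadamard, Matrix.of_apply,
      Matrix.smul_apply, smul_eq_mul, mul_one, Finset.mul_sum]
    exact Finset.sum_congr rfl fun m _ => Finset.sum_congr rfl fun k _ => by ring
  rw [hL]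
  have hsplit : ∀ m k, 2 * Q m k * F m k * v m
      = Q m k * (ψ m - ψ k) + (Q m k * (v k * F m k) + Q m k * (v m * F m k)) := by
    intro m k
    linear_combination Q m k * hEC m k
  have h1 : ∑ m, ∑ k, Q m k * (ψ m - ψ k) = - ∑ m, b m * ψ m := by
    have e1 : ∑ m, ∑ k, Q m k * (ψ m - ψ k)
        = (∑ m, ψ m * ∑ k, Q m k) - ∑ m, ∑ k, Q m k * ψ k := by
      rw [← Finset.sum_sub_distrib]
      refine Finset.sum_congr rfl fun m _ => ?_
      rw [Finset.mul_sum, ← Finset.sum_sub_distrib]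
      exact Finset.sum_congr rfl fun k _ => by ring
    rw [e1]
    rw [Finset.sum_comm (f := fun m k => Q m k * ψ k)]
    have e2 : ∀ k, ∑ m, Q m k * ψ k = b k * ψ k := fun k => by
      rw [← Finset.sum_mul, hcol]
    simp [hrow, e2]
  have h2 : (∑ m, ∑ k, Q m k * (v k * F m k)) + (∑ m, ∑ k, Q m k * (v m * F m k))
      = ∑ m, b m * (v m * F m m) := by
    rw [Finset.sum_comm (f := fun m k => Q m k * (v k * F m k))]
    rw [← Finset.sum_add_distrib]
    refine Finset.sum_congr rfl fun m _ => ?_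
    rw [← Finset.sum_add_distrib]
    have : ∀ k, Q k m * (v m * F k m) + Q m k * (v m * F m k)
        = Matrix.diagonal b m k * (v m * F m k) := fun k => by
      rw [hFs m k, ← hBe m k]; ring
    rw [Finset.sum_congr rfl fun k _ => this k]
    simp [Matrix.diagonal]
  calc ∑ m, ∑ k, 2 * Q m k * F m k * v m
      = (∑ m, ∑ k, Q m k * (ψ m - ψ k))
        + ((∑ m, ∑ k, Q m k * (v k * F m k)) + ∑ m, ∑ k, Q m k * (v m * F m k)) := by
        simp_rw [hsplit, Finset.sum_add_distrib]
    _ = (- ∑ m, b m * ψ m) + ∑ m, b m * (v m * F m m) := by rw [h1, h2]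
    _ = ∑ m, b m * (v m * F m m - ψ m) := by
        rw [← Finset.sum_neg_distrib, ← Finset.sum_add_distrib]
        exact Finset.sum_congr rfl fun m _ => by ring
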